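/- Let gᵢ : ℝᵈ → ℝ (i = 1,...,N) each be differentiable with Lᵢ/N-Lipschitz gradient (in the sense ‖∇gᵢ(x)−∇gᵢ(y)‖ ≤ Lᵢ‖x−y‖), let ηᵢ ≥ Lᵢ/N, xᵢ ∈ ℝᵈ, z ∈ ℝᵈ, λᵢ = −(1/N)∇gᵢ(xᵢ), and h, g₀ with g₀ + ∑ᵢ(1/N)gᵢ + h bounded below by f̲. Then the augmented Lagrangian L(x,z,λ) = ∑ᵢ[(1/N)gᵢ(xᵢ) + ⟨λᵢ, xᵢ−z⟩ + (ηᵢ/2)‖xᵢ−z‖²] + g₀(z) + h(z) satisfies L(x,z,λ) ≥ f̲. -/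

import Mathlib

/-! By the descent lemma for `gᵢ` at `xᵢ`, with `ηᵢ ≥ Lᵢ/N`, the `i`-th summand of the augmented
Lagrangian is at least `(1/N) gᵢ(z)`; summing, the Lagrangian dominates `f(z) ≥ f̲`. -/

theorem image_le_add_fderiv_add_sq {E : Type*} [NormedAddCommGroup E] [NormedSpace ℝ E]
    {f : E → ℝ} {f' : E → E →L[ℝ] ℝ} {L : ℝ} (hf : ∀ x, HasFDerivAt f (f' x) x)
    (hlip : ∀ x y, ‖f' x - f' y‖ ≤ L * ‖x - y‖) (x y : E) :
    f y ≤ f x + f' x (y - x) + L / 2 * ‖y - x‖ ^ 2 := by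
  set v := y - x
  -- The Lipschitz bound makes `φ` antitone on `[0, ∞)`, and `φ 1 ≤ φ 0` is the claim.
  let φ : ℝ → ℝ := fun t => f (x + t • v) - t * f' x v - L / 2 * ‖v‖ ^ 2 * t ^ 2
  have hφ : ∀ t, HasDerivAt φ (f' (x + t • v) v - f' x v - L * ‖v‖ ^ 2 * t) t := by
    intro t
    have hline : HasDerivAt (fun t : ℝ => x + t • v) v t := by
      simpa using ((hasDerivAt_id' t).smul_const v).const_add x
    refine ((((hf _).comp_hasDerivAt t hline).sub ((hasDerivAt_id' t).mul_const (f' x v))).sub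
      (((hasDerivAt_id' t).pow 2).const_mul (L / 2 * ‖v‖ ^ 2))).congr_deriv ?_
    ring
  have hφ_nonpos : ∀ t, 0 ≤ t → f' (x + t • v) v - f' x v - L * ‖v‖ ^ 2 * t ≤ 0 := by
    intro t ht
    calc f' (x + t • v) v - f' x v - L * ‖v‖ ^ 2 * t
        = (f' (x + t • v) - f' x) v - L * ‖v‖ ^ 2 * t := by
          rw [sub_apply]
      _ ≤ ‖f' (x + t • v) - f' x‖ * ‖v‖ - L * ‖v‖ ^ 2 * t := by
          gcongr
          exact (le_abs_self _).trans ((f' (x + t • v) - f' x).le_opNorm v)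
      _ ≤ L * ‖t • v‖ * ‖v‖ - L * ‖v‖ ^ 2 * t := by
          gcongr
          simpa using hlip (x + t • v) x
      _ = 0 := by
          rw [norm_smul, Real.norm_of_nonneg ht]
          ring
  have hanti : AntitoneOn φ (Set.Ici 0) :=
    antitoneOn_of_hasDerivWithinAt_nonpos (convex_Ici 0)
      (fun t _ => (hφ t).continuousAt.continuousWithinAt) (fun t _ => (hφ t).hasDerivWithinAt)
      (fun t ht => hφ_nonpos t (by rw [interior_Ici] at ht; exact le_of_lt ht))
  have h01 := hanti Set.self_mem_Ici (Set.mem_Ici.2 zero_le_one) zero_le_one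
  simp only [φ, v, one_smul, zero_smul, add_zero, add_sub_cancel] at h01
  linarith

theorem image_le_add_inner_add_sq {F : Type*} [NormedAddCommGroup F] [InnerProductSpace ℝ F]
    [CompleteSpace F] {g : F → ℝ} {g' : F → F} {L : ℝ} (hg : ∀ x, HasGradientAt g (g' x) x)
    (hlip : ∀ x y, ‖g' x - g' y‖ ≤ L * ‖x - y‖) (x y : F) :
    g y ≤ g x + inner ℝ (g' x) (y - x) + L / 2 * ‖y - x‖ ^ 2 :=
  image_le_add_fderiv_add_sq (fun x => (hg x).hasFDerivAt)
    (fun x y => by simpa [← map_sub] using hlip x y) x y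

theorem mul_image_le_augmented_lagrangian_term {F : Type*} [NormedAddCommGroup F] [InnerProductSpace ℝ F]
    [CompleteSpace F] {g : F → ℝ} {g' : F → F} {L c η : ℝ} (hg : ∀ x, HasGradientAt g (g' x) x)
    (hlip : ∀ x y, ‖g' x - g' y‖ ≤ L * ‖x - y‖) (hc : 0 ≤ c) (hη : c * L ≤ η) (x z : F) :
    c * g z ≤ c * g x + inner ℝ (-c • g' x) (x - z) + η / 2 * ‖x - z‖ ^ 2 := by
  have hdescent := mul_le_mul_of_nonneg_left (image_le_add_inner_add_sq hg hlip x z) hc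
  have hη_sq : c * L / 2 * ‖z - x‖ ^ 2 ≤ η / 2 * ‖z - x‖ ^ 2 := by gcongr
  have hinner : inner ℝ (-c • g' x) (x - z) = c * inner ℝ (g' x) (z - x) := by
    rw [real_inner_smul_left, ← neg_sub z x, inner_neg_right, neg_mul_neg]
  rw [hinner, norm_sub_rev]
  linarith

theorem aug_lagrangian_lower_bound_general {d N : ℕ}
    (g : Fin N → EuclideanSpace ℝ (Fin d) → ℝ)
    (g' : Fin N → EuclideanSpace ℝ (Fin d) → EuclideanSpace ℝ (Fin d))
    (L : Fin N → ℝ)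
    (hdiff : ∀ i x, HasGradientAt (g i) (g' i x) x)
    (hlip : ∀ i x y, ‖g' i x - g' i y‖ ≤ L i * ‖x - y‖)
    (η : Fin N → ℝ) (hη : ∀ i, L i / N ≤ η i)
    (x : Fin N → EuclideanSpace ℝ (Fin d)) (z : EuclideanSpace ℝ (Fin d))
    (lam : Fin N → EuclideanSpace ℝ (Fin d))
    (hlam : ∀ i, lam i = -((1 : ℝ) / N) • g' i (x i))
    (g₀ h : EuclideanSpace ℝ (Fin d) → ℝ) (fbar : ℝ)
    (hbound : ∀ w, fbar ≤ (1 / N) * ∑ i, g i w + g₀ w + h w) :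
    fbar ≤ (∑ i, ((1 / N) * g i (x i) + (inner ℝ (lam i) (x i - z) : ℝ)
              + η i / 2 * ‖x i - z‖ ^ 2)) + g₀ z + h z := by
  calc fbar ≤ (1 / N) * ∑ i, g i z + g₀ z + h z := hbound z
    _ ≤ _ := by
      rw [Finset.mul_sum]
      gcongr with i
      rw [hlam i]
      exact mul_image_le_augmented_lagrangian_term (hdiff i) (hlip i) (by positivity)
        (by rw [one_div_mul_eq_div]; exact hη i) (x i) z

/-- The augmented Lagrangian with λᵢ = −(1/N)∇gᵢ(xᵢ) and ηᵢ ≥ Lᵢ/N is bounded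
below by the lower bound f̲ of the objective. -/
theorem aug_lagrangian_lower_bound {d N : ℕ} (hN : 0 < N)
    (g : Fin N → EuclideanSpace ℝ (Fin d) → ℝ)
    (g' : Fin N → EuclideanSpace ℝ (Fin d) → EuclideanSpace ℝ (Fin d))
    (L : Fin N → ℝ)
    (hdiff : ∀ i x, HasGradientAt (g i) (g' i x) x)
    (hlip : ∀ i x y, ‖g' i x - g' i y‖ ≤ L i * ‖x - y‖)
    (η : Fin N → ℝ) (hη : ∀ i, L i / N ≤ η i)
    (x : Fin N → EuclideanSpace ℝ (Fin d)) (z : EuclideanSpace ℝ (Fin d))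
    (lam : Fin N → EuclideanSpace ℝ (Fin d))
    (hlam : ∀ i, lam i = -((1 : ℝ) / N) • g' i (x i))
    (g₀ h : EuclideanSpace ℝ (Fin d) → ℝ) (fbar : ℝ)
    (hbound : ∀ w, fbar ≤ (1 / N) * ∑ i, g i w + g₀ w + h w) :
    fbar ≤ (∑ i, ((1 / N) * g i (x i) + (inner ℝ (lam i) (x i - z) : ℝ)
              + η i / 2 * ‖x i - z‖ ^ 2)) + g₀ z + h z :=
  aug_lagrangian_lower_bound_general g g' L hdiff hlip η hη x z lam hlam g₀ h fbar hbound
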